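/- Let 0 < γ < 1. For the sorted update times (t_k^i) of coordinate i (with t_0^i the first element of 𝒯^i), under partial asynchronism with parameters B₁, B₂ and a γ-contraction G with fixed point x*, for each t ≥ B₁ and each i, if t ∈ (t_k^i, t_{k+1}^i] for some k, then |x_i(t) − x_i*| ≤ ‖x(0) − x*‖∞ · ρ^{t_k^i − B₁}, where ρ = γ^{1/(B₁+B₂−1)}. -/

import Mathlib

/-!
Write `M = ‖x 0 - x*‖`, `B = B₁ + B₂ - 1` and `ρ = γ ^ (1 / B)`, so that `γ = ρ ^ B`. The errors
never exceed `M`. The invariant is that after an update of coordinate `i` at time `ℓ`, its error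
stays at most `M ρ ^ (ℓ - B₁)`. Every window of length `B₁` contains an update of each coordinate, so
at any time `u` all errors are at most `M ρ ^ (u - 2 B₁)`. An update at time `s` reads values no older
than `s - B₂ + 1`, whose errors are at most `M ρ ^ (s - B₁ - B)`; the contraction multiplies this by
`γ = ρ ^ B`, which restores the invariant at `ℓ = s`.
-/

variable {ι : Type*} [Fintype ι]

theorem abs_apply_sub_le_of_contraction {G : (ι → ℝ) → (ι → ℝ)} {γ : ℝ} {xstar : ι → ℝ}
    (hcontr : ∀ u v : ι → ℝ, ‖G u - G v‖ ≤ γ * ‖u - v‖) (hfix : G xstar = xstar) (hγ : 0 ≤ γ)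
    {y : ι → ℝ} {C : ℝ} (hy : ∀ j, |y j - xstar j| ≤ C) (i : ι) :
    |G y i - xstar i| ≤ γ * C := by
  have hC : 0 ≤ C := (abs_nonneg _).trans (hy i)
  have hyC : ‖y - xstar‖ ≤ C := (pi_norm_le_iff_of_nonneg hC).2 hy
  calc |G y i - xstar i| = ‖(G y - G xstar) i‖ := by rw [hfix]; rfl
    _ ≤ ‖G y - G xstar‖ := norm_le_pi_norm _ i
    _ ≤ γ * ‖y - xstar‖ := hcontr y xstar
    _ ≤ γ * C := mul_le_mul_of_nonneg_left hyC hγ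

theorem le_mul_zpow_of_forall_window {S : Set ℕ} {B u : ℕ} {e M ρ : ℝ} (hρ0 : 0 < ρ) (hρ1 : ρ ≤ 1)
    (hB : 0 < B) (hS : ∀ t, ∃ s, t ≤ s ∧ s ≤ t + B - 1 ∧ s ∈ S) (hM : 0 ≤ M) (he : e ≤ M)
    (hℓ : ∀ ℓ ∈ S, ℓ < u → e ≤ M * ρ ^ ((ℓ : ℤ) - B)) :
    e ≤ M * ρ ^ ((u : ℤ) - 2 * B) := by
  by_cases huB : B ≤ u
  · obtain ⟨w, hw₁, hw₂, hwS⟩ := hS (u - B)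
    calc e ≤ M * ρ ^ ((w : ℤ) - B) := hℓ w hwS (by omega)
      _ ≤ M * ρ ^ ((u : ℤ) - 2 * B) := by
        gcongr M * ?_
        exact zpow_le_zpow_right_of_le_one₀ hρ0 hρ1 (by omega)
  · calc e ≤ M * 1 := by rwa [mul_one]
      _ ≤ M * ρ ^ ((u : ℤ) - 2 * B) := by
        gcongr
        exact one_le_zpow_of_nonpos₀ hρ0 hρ1 (by omega)

def IsAsyncIteration (G : (ι → ℝ) → (ι → ℝ)) (τ : ι → ℕ → ℕ) (𝒯 : ι → Set ℕ)
    (x : ℕ → ι → ℝ) : Prop :=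
  ∀ t i, (t ∈ 𝒯 i → x (t + 1) i = G (fun j => x (τ j t) j) i) ∧
    (t ∉ 𝒯 i → x (t + 1) i = x t i)

namespace IsAsyncIteration

variable {G : (ι → ℝ) → (ι → ℝ)} {τ : ι → ℕ → ℕ} {𝒯 : ι → Set ℕ} {x : ℕ → ι → ℝ}
  {γ : ℝ} {xstar : ι → ℝ}

theorem abs_sub_le_norm (hx : IsAsyncIteration G τ 𝒯 x)
    (hcontr : ∀ u v : ι → ℝ, ‖G u - G v‖ ≤ γ * ‖u - v‖) (hfix : G xstar = xstar)
    (hγ0 : 0 ≤ γ) (hγ1 : γ ≤ 1) (hτ : ∀ j t, τ j t ≤ t) (t : ℕ) (i : ι) :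
    |x t i - xstar i| ≤ ‖x 0 - xstar‖ := by
  induction t using Nat.strong_induction_on generalizing i with
  | _ t ih =>
    rcases t with _ | s
    · exact norm_le_pi_norm (x 0 - xstar) i
    by_cases hs : s ∈ 𝒯 i
    · rw [(hx s i).1 hs]
      calc _ ≤ γ * ‖x 0 - xstar‖ := abs_apply_sub_le_of_contraction hcontr hfix hγ0
            (fun j => ih _ (Nat.lt_succ_of_le (hτ j s)) j) i
        _ ≤ ‖x 0 - xstar‖ := mul_le_of_le_one_left (norm_nonneg _) hγ1
    · rw [(hx s i).2 hs]
      exact ih s s.lt_succ_self i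

theorem abs_sub_le_mul_zpow (hx : IsAsyncIteration G τ 𝒯 x)
    (hcontr : ∀ u v : ι → ℝ, ‖G u - G v‖ ≤ γ * ‖u - v‖) (hfix : G xstar = xstar)
    (hγ0 : 0 ≤ γ) (hγ1 : γ ≤ 1) {ρ : ℝ} (hρ0 : 0 < ρ) (hρ1 : ρ ≤ 1) {B₁ B₂ : ℕ}
    (hγρ : γ ≤ ρ ^ ((B₁ : ℤ) + B₂ - 1)) (hB₁ : 0 < B₁)
    (ha : ∀ i t, ∃ s, t ≤ s ∧ s ≤ t + B₁ - 1 ∧ s ∈ 𝒯 i)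
    (hb : ∀ j t, t < τ j t + B₂ ∧ τ j t ≤ t) (t : ℕ) (i : ι) :
    ∀ ℓ ∈ 𝒯 i, ℓ < t → |x t i - xstar i| ≤ ‖x 0 - xstar‖ * ρ ^ ((ℓ : ℤ) - B₁) := by
  set M := ‖x 0 - xstar‖
  have hM : 0 ≤ M := norm_nonneg _
  have hbound := hx.abs_sub_le_norm hcontr hfix hγ0 hγ1 fun j t => (hb j t).2
  induction t using Nat.strong_induction_on generalizing i with
  | _ t ih =>
    rcases t with _ | s
    · exact fun ℓ _ hℓ => absurd hℓ ℓ.not_lt_zero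
    intro ℓ hℓ hℓs
    by_cases hs : s ∈ 𝒯 i
    · have hread : ∀ j, |x (τ j s) j - xstar j| ≤ M * ρ ^ ((s : ℤ) - B₁ - (B₁ + B₂ - 1)) := by
        intro j
        calc _ ≤ M * ρ ^ ((τ j s : ℤ) - 2 * B₁) :=
              le_mul_zpow_of_forall_window hρ0 hρ1 hB₁ (ha j) hM (hbound _ j)
                (ih _ (Nat.lt_succ_of_le (hb j s).2) j)
          _ ≤ _ := by
            gcongr M * ?_
            exact zpow_le_zpow_right_of_le_one₀ hρ0 hρ1 (by have := (hb j s).1; omega)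
      rw [(hx s i).1 hs]
      calc _ ≤ γ * (M * ρ ^ ((s : ℤ) - B₁ - (B₁ + B₂ - 1))) :=
            abs_apply_sub_le_of_contraction hcontr hfix hγ0 hread i
        _ ≤ ρ ^ ((B₁ : ℤ) + B₂ - 1) * (M * ρ ^ ((s : ℤ) - B₁ - (B₁ + B₂ - 1))) := by gcongr
        _ = M * ρ ^ ((s : ℤ) - B₁) := by
          rw [mul_left_comm, ← zpow_add₀ hρ0.ne']
          ring_nf
        _ ≤ M * ρ ^ ((ℓ : ℤ) - B₁) := by
          gcongr M * ?_
          exact zpow_le_zpow_right_of_le_one₀ hρ0 hρ1 (by omega)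
    · rw [(hx s i).2 hs]
      have hℓs' : ℓ < s := lt_of_le_of_ne (Nat.lt_succ_iff.mp hℓs) (by rintro rfl; exact hs hℓ)
      exact ih s s.lt_succ_self i ℓ hℓ hℓs'

end IsAsyncIteration

theorem async_staircase_decreasing_general
    (n : ℕ)
    (G : (Fin n → ℝ) → (Fin n → ℝ)) (γ : ℝ) (hγ0 : 0 < γ) (hγ1 : γ < 1)
    (hcontr : ∀ u v : Fin n → ℝ, ‖G u - G v‖ ≤ γ * ‖u - v‖)
    (xstar : Fin n → ℝ) (hfix : G xstar = xstar)
    (x : ℕ → Fin n → ℝ)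
    (τ : Fin n → ℕ → ℕ)
    (𝒯 : Fin n → Set ℕ)
    (hupd : ∀ t : ℕ, ∀ i : Fin n,
      (t ∈ 𝒯 i → x (t + 1) i = G (fun j => x (τ j t) j) i) ∧
      (t ∉ 𝒯 i → x (t + 1) i = x t i))
    (B₁ B₂ : ℕ) (hB₁ : 0 < B₁) (hB₂ : 0 < B₂)
    (ha : ∀ i : Fin n, ∀ t : ℕ, ∃ s, t ≤ s ∧ s ≤ t + B₁ - 1 ∧ s ∈ 𝒯 i)
    (hb : ∀ j : Fin n, ∀ t : ℕ, t < τ j t + B₂ ∧ τ j t ≤ t)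
    (tk : Fin n → ℕ → ℕ)               -- sorted enumeration of 𝒯 i
    (htk_mem : ∀ i k, tk i k ∈ 𝒯 i) :
    ∀ t : ℕ, B₁ ≤ t → ∀ i : Fin n, ∀ k : ℕ,
      tk i k < t → t ≤ tk i (k + 1) →
      |x t i - xstar i| ≤
        ‖x 0 - xstar‖ *
          (γ ^ ((1 : ℝ) / (B₁ + B₂ - 1))) ^ ((tk i k : ℝ) - B₁) := by
  intro t _ i k hkt _
  have hB : (0 : ℝ) < B₁ + B₂ - 1 := by
    have : (1 : ℝ) ≤ B₁ := by exact_mod_cast hB₁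
    have : (1 : ℝ) ≤ B₂ := by exact_mod_cast hB₂
    linarith
  set ρ := γ ^ ((1 : ℝ) / (B₁ + B₂ - 1))
  have hρ0 : 0 < ρ := by positivity
  have hρ1 : ρ ≤ 1 := Real.rpow_le_one hγ0.le hγ1.le (by positivity)
  have hγρ : γ = ρ ^ ((B₁ : ℤ) + B₂ - 1) := by
    rw [← Real.rpow_intCast, ← Real.rpow_mul hγ0.le]
    push_cast
    rw [one_div_mul_cancel hB.ne', Real.rpow_one]
  have key := IsAsyncIteration.abs_sub_le_mul_zpow hupd hcontr hfix hγ0.le hγ1.le hρ0 hρ1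
    hγρ.le hB₁ ha hb t i (tk i k) (htk_mem i k) hkt
  rwa [← Real.rpow_intCast, Int.cast_sub, Int.cast_natCast, Int.cast_natCast] at key

/-- Staircase-decreasing error bound for asynchronous coordinate
updates: between consecutive update times of coordinate `i`, the coordinatewise
error is bounded using the last update time. -/
theorem async_staircase_decreasing
    (n : ℕ) (hn : 0 < n)
    (G : (Fin n → ℝ) → (Fin n → ℝ)) (γ : ℝ) (hγ0 : 0 < γ) (hγ1 : γ < 1)
    (hcontr : ∀ u v : Fin n → ℝ, ‖G u - G v‖ ≤ γ * ‖u - v‖)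
    (xstar : Fin n → ℝ) (hfix : G xstar = xstar)
    (x : ℕ → Fin n → ℝ)
    (τ : Fin n → ℕ → ℕ)
    (𝒯 : Fin n → Set ℕ)
    (hupd : ∀ t : ℕ, ∀ i : Fin n,
      (t ∈ 𝒯 i → x (t + 1) i = G (fun j => x (τ j t) j) i) ∧
      (t ∉ 𝒯 i → x (t + 1) i = x t i))
    (B₁ B₂ : ℕ) (hB₁ : 0 < B₁) (hB₂ : 0 < B₂)
    (ha : ∀ i : Fin n, ∀ t : ℕ, ∃ s, t ≤ s ∧ s ≤ t + B₁ - 1 ∧ s ∈ 𝒯 i)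
    (hb : ∀ j : Fin n, ∀ t : ℕ, t < τ j t + B₂ ∧ τ j t ≤ t)
    (tk : Fin n → ℕ → ℕ)               -- sorted enumeration of 𝒯 i
    (htk_mono : ∀ i, StrictMono (tk i))
    (htk_mem : ∀ i k, tk i k ∈ 𝒯 i)
    (htk_surj : ∀ i, ∀ s ∈ 𝒯 i, ∃ k, tk i k = s) :
    ∀ t : ℕ, B₁ ≤ t → ∀ i : Fin n, ∀ k : ℕ,
      tk i k < t → t ≤ tk i (k + 1) →
      |x t i - xstar i| ≤
        ‖x 0 - xstar‖ *
          (γ ^ ((1 : ℝ) / (B₁ + B₂ - 1))) ^ ((tk i k : ℝ) - B₁) :=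
  async_staircase_decreasing_general n G γ hγ0 hγ1 hcontr xstar hfix x τ 𝒯 hupd B₁ B₂ hB₁ hB₂ ha hb
    tk htk_mem
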